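/- Let M be a positive integer, L = 2M, and let R be an L×L skew-symmetric complex matrix that is checkerboard up to permutation, i.e. there exist an L×L permutation matrix P and an M×M complex matrix G such that P^T R P = [[0, G], [−G^T, 0]] in 2×2 block form. Then for every real α > 0, Pf_α(R) = Det_α(G). -/

import Mathlib

open scoped BigOperators Matrix

/-- The square submatrix of `A` with rows indexed by `I` and columns indexed by `J`
(both in increasing order), as a determinant; it is `0` if `I.card ≠ J.card`. -/
noncomputable def subdetC {N : ℕ} (A : Matrix (Fin N) (Fin N) ℂ) (I J : Finset (Fin N)) : ℂ :=
  if h : J.card = I.card then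
    Matrix.det (Matrix.of fun a b : Fin I.card =>
      A (I.orderEmbOfFin rfl a) (J.orderEmbOfFin h b))
  else 0

/-- `Det_β(A) = Σ_{k=0}^{N} Σ_{|I|=|J|=k} |det A[I,J]|^β`. -/
noncomputable def DetPowC {N : ℕ} (A : Matrix (Fin N) (Fin N) ℂ) (β : ℝ) : ℝ :=
  ∑ k ∈ Finset.range (N + 1),
    ∑ I ∈ Finset.univ.filter (fun I : Finset (Fin N) => I.card = k),
      ∑ J ∈ Finset.univ.filter (fun J : Finset (Fin N) => J.card = k),
        ‖subdetC A I J‖ ^ β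

/-- `Pf_β(R) = Σ_{S, |S| even} |det R[S,S]|^{β/2}`, the sum of β-th powers of the
absolute values of all principal Pfaffian minors of a skew-symmetric matrix. -/
noncomputable def PfPowC {N : ℕ} (R : Matrix (Fin N) (Fin N) ℂ) (β : ℝ) : ℝ :=
  ∑ S ∈ Finset.univ.filter (fun S : Finset (Fin N) => Even S.card),
    ‖subdetC R S S‖ ^ (β / 2)

/-- `P` is a permutation matrix. -/
def IsPermMatrix {n : ℕ} (P : Matrix (Fin n) (Fin n) ℂ) : Prop :=
  ∃ σ : Equiv.Perm (Fin n), ∀ i j, P i j = if σ j = i then 1 else 0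

/-- The `2M × 2M` block matrix `[[0, G], [-Gᵀ, 0]]`. -/
def checkerBlock {M : ℕ} (G : Matrix (Fin M) (Fin M) ℂ) :
    Matrix (Fin (2 * M)) (Fin (2 * M)) ℂ :=
  Matrix.reindex (finSumFinEquiv.trans (finCongr (two_mul M).symm))
    (finSumFinEquiv.trans (finCongr (two_mul M).symm))
    (Matrix.fromBlocks 0 G (-Gᵀ) 0)

/-!
Conjugation by a permutation matrix relabels rows and columns simultaneously, so it changes
principal minors only by a sign, and `Pf_α(R)` is the same sum for the block matrix
`B = [[0, G], [-Gᵀ, 0]]`; since principal minors of odd order of a skew-symmetric matrix vanish,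
the parity restriction may be dropped. A subset of the index set of `B` is a pair `(I, J)` of
subsets of the two blocks, and the principal submatrix of `B` on it is
`[[0, G[I,J]], [-G[I,J]ᵀ, 0]]`. Its determinant is `± (det G[I,J])²` when `|I| = |J|`, and `0`
otherwise because one of the off-diagonal blocks then has a kernel. Hence
`|det B[S,S]|^{α/2} = |det G[I,J]|^α` term by term.
-/

open Finset Matrix Function

theorem Function.Injective.exists_equiv_comp_eq {α β γ : Type*} {f : α → γ} {f' : β → γ}
    (hf : Injective f) (hf' : Injective f') (h : Set.range f = Set.range f') :
    ∃ e : α ≃ β, f' ∘ e = f :=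
  ⟨(Equiv.ofInjective f hf).trans ((Equiv.setCongr h).trans (Equiv.ofInjective f' hf').symm),
    funext fun a => by simp [Equiv.apply_ofInjective_symm]⟩

namespace Matrix

variable {m n R : Type*} [Fintype m] [Fintype n]

theorem det_eq_zero_of_transpose_eq_neg [DecidableEq n] [CommRing R] [IsAddTorsionFree R]
    {A : Matrix n n R} (hA : Aᵀ = -A) (hn : Odd (Fintype.card n)) : A.det = 0 :=
  self_eq_neg.mp <| by conv_lhs => rw [← det_transpose, hA, det_neg, hn.neg_one_pow, neg_one_mul]

theorem norm_det_submatrix_equiv_equiv [DecidableEq m] [DecidableEq n] [SeminormedCommRing R]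
    (e₁ e₂ : m ≃ n) (A : Matrix n n R) : ‖(A.submatrix e₁ e₂).det‖ = ‖A.det‖ := by
  have hee : e₂ = e₁.trans (e₁.symm.trans e₂) := by ext; simp
  rw [hee]
  change ‖((A.submatrix id (e₁.symm.trans e₂)).submatrix e₁ e₁).det‖ = ‖A.det‖
  rw [det_submatrix_equiv_self, det_permute', ← zsmul_eq_mul, ← Units.smul_def,
    norm_units_zsmul]

theorem norm_det_submatrix_eq_of_range_eq [DecidableEq m] [DecidableEq n] [SeminormedCommRing R]
    {ι : Type*} (A : Matrix ι ι R) {f g : m → ι} {f' g' : n → ι} (hf : Injective f)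
    (hg : Injective g) (hf' : Injective f') (hg' : Injective g')
    (hff' : Set.range f = Set.range f') (hgg' : Set.range g = Set.range g') :
    ‖(A.submatrix f g).det‖ = ‖(A.submatrix f' g').det‖ := by
  obtain ⟨e₁, rfl⟩ := hf.exists_equiv_comp_eq hf' hff'
  obtain ⟨e₂, rfl⟩ := hg.exists_equiv_comp_eq hg' hgg'
  exact norm_det_submatrix_equiv_equiv e₁ e₂ (A.submatrix f' g')

theorem exists_mulVec_eq_zero_of_card_lt {K : Type*} [Field K] (A : Matrix m n K)
    (h : Fintype.card m < Fintype.card n) : ∃ v ≠ 0, A *ᵥ v = 0 := by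
  obtain ⟨v, hv, hv0⟩ := (Submodule.ne_bot_iff _).mp <|
    LinearMap.ker_ne_bot_of_finrank_lt (f := A.mulVecLin) (by simpa using h)
  exact ⟨v, hv0, hv⟩

theorem det_fromBlocks_zero_zero_of_card_ne [DecidableEq m] [DecidableEq n] {K : Type*} [Field K]
    (B : Matrix m n K) (C : Matrix n m K) (h : Fintype.card m ≠ Fintype.card n) :
    (fromBlocks 0 B C 0).det = 0 := by
  rw [← exists_mulVec_eq_zero_iff]
  rcases h.lt_or_gt with h | h
  · obtain ⟨v, hv, hBv⟩ := B.exists_mulVec_eq_zero_of_card_lt h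
    exact ⟨0 ⊕ᵥ v, fun h => hv (funext fun j => congrFun h (.inr j)),
      by simp [fromBlocks_mulVec, hBv]⟩
  · obtain ⟨v, hv, hCv⟩ := C.exists_mulVec_eq_zero_of_card_lt h
    exact ⟨v ⊕ᵥ 0, fun h => hv (funext fun i => congrFun h (.inl i)),
      by simp [fromBlocks_mulVec, hCv]⟩

theorem norm_det_fromBlocks_zero_zero [DecidableEq n] [SeminormedCommRing R] [NormMulClass R]
    (B C : Matrix n n R) : ‖(fromBlocks 0 B C 0).det‖ = ‖B.det‖ * ‖C.det‖ := by
  rw [← norm_det_submatrix_equiv_equiv (Equiv.refl _) (Equiv.sumComm n n)]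
  simp [det_fromBlocks_zero₂₁]

theorem norm_det_fromBlocks_submatrix_disjSum [DecidableEq m] [DecidableEq n]
    [SeminormedCommRing R] {α β : Type*} [DecidableEq α] [DecidableEq β] (B : Matrix α β R)
    (C : Matrix β α R) {I : Finset α} {J : Finset β} {f : m → α} {g : n → β}
    (hf : Injective f) (hg : Injective g) (hfI : Set.range f = I) (hgJ : Set.range g = J) :
    ‖((fromBlocks 0 B C 0).submatrix ((↑) : I.disjSum J → α ⊕ β) (↑)).det‖
      = ‖(fromBlocks 0 (B.submatrix f g) (C.submatrix g f) 0).det‖ := by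
  have hrange : Set.range ((↑) : I.disjSum J → α ⊕ β) = Set.range (Sum.map f g) := by
    ext (a | b)
    · simpa using (Set.ext_iff.mp hfI a).symm
    · simpa using (Set.ext_iff.mp hgJ b).symm
  rw [norm_det_submatrix_eq_of_range_eq _ Subtype.val_injective Subtype.val_injective
    (hf.sumMap hg) (hf.sumMap hg) hrange hrange]
  congr 2
  ext (i | i) (j | j) <;> rfl

end Matrix

section Minors

variable {N : ℕ}

theorem norm_subdetC_eq_norm_det_submatrix {κ : Type*} [Fintype κ] [DecidableEq κ]
    (A : Matrix (Fin N) (Fin N) ℂ) {I J : Finset (Fin N)} {f g : κ → Fin N} (hf : Injective f)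
    (hg : Injective g) (hfI : Set.range f = I) (hgJ : Set.range g = J) :
    ‖subdetC A I J‖ = ‖(A.submatrix f g).det‖ := by
  obtain ⟨eI, -⟩ := hf.exists_equiv_comp_eq (I.orderEmbOfFin rfl).injective
    (by rw [range_orderEmbOfFin, hfI])
  obtain ⟨eJ, -⟩ := hg.exists_equiv_comp_eq (J.orderEmbOfFin rfl).injective
    (by rw [range_orderEmbOfFin, hgJ])
  have hcard : J.card = I.card := by simpa using Fintype.card_congr (eJ.symm.trans eI)
  rw [subdetC, dif_pos hcard]
  exact norm_det_submatrix_eq_of_range_eq A (I.orderEmbOfFin rfl).injective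
    (J.orderEmbOfFin hcard).injective hf hg (by rw [range_orderEmbOfFin, hfI])
    (by rw [range_orderEmbOfFin, hgJ])

theorem norm_subdetC_map_equiv {κ : Type*} [Fintype κ] [DecidableEq κ]
    (A : Matrix (Fin N) (Fin N) ℂ) (e : κ ≃ Fin N) (U : Finset κ) :
    ‖subdetC A (U.map e.toEmbedding) (U.map e.toEmbedding)‖
      = ‖((A.submatrix e e).submatrix ((↑) : U → κ) (↑)).det‖ := by
  have hrange : Set.range (e ∘ ((↑) : U → κ)) = U.map e.toEmbedding := by
    rw [Set.range_comp, Subtype.range_coe, coe_map]; rfl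
  exact norm_subdetC_eq_norm_det_submatrix A (e.injective.comp Subtype.val_injective)
    (e.injective.comp Subtype.val_injective) hrange hrange

theorem subdetC_self_eq_zero_of_transpose_eq_neg {R : Matrix (Fin N) (Fin N) ℂ} (hR : Rᵀ = -R)
    {S : Finset (Fin N)} (hS : ¬Even S.card) : subdetC R S S = 0 := by
  rw [subdetC, dif_pos rfl]
  refine det_eq_zero_of_transpose_eq_neg ?_ (by simpa using hS)
  change (R.submatrix _ _)ᵀ = -R.submatrix _ _
  rw [transpose_submatrix, hR]
  rfl

theorem PfPowC_eq_sum_of_transpose_eq_neg {R : Matrix (Fin N) (Fin N) ℂ} (hR : Rᵀ = -R)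
    {β : ℝ} (hβ : β ≠ 0) : PfPowC R β = ∑ S, ‖subdetC R S S‖ ^ (β / 2) :=
  sum_filter_of_ne fun S _ hS => by_contra fun hodd => hS <| by
    rw [subdetC_self_eq_zero_of_transpose_eq_neg hR hodd, norm_zero,
      Real.zero_rpow (div_ne_zero hβ two_ne_zero)]

theorem DetPowC_eq_sum (A : Matrix (Fin N) (Fin N) ℂ) {β : ℝ} (hβ : β ≠ 0) :
    DetPowC A β = ∑ I, ∑ J, ‖subdetC A I J‖ ^ β := by
  calc DetPowC A β
      = ∑ k ∈ range (N + 1), ∑ I with I.card = k, ∑ J with J.card = I.card,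
          ‖subdetC A I J‖ ^ β :=
        sum_congr rfl fun k _ => sum_congr rfl fun I hI => by rw [(mem_filter.mp hI).2]
    _ = ∑ I, ∑ J with J.card = I.card, ‖subdetC A I J‖ ^ β :=
        sum_fiberwise_of_maps_to (fun I _ =>
          mem_range.mpr (Nat.lt_succ_of_le ((card_le_univ I).trans_eq (Fintype.card_fin N)))) _
    _ = _ := sum_congr rfl fun I _ => sum_filter_of_ne fun J _ hJ => by_contra fun h => hJ <| by
        rw [subdetC, dif_neg h, norm_zero, Real.zero_rpow hβ]

end Minors

theorem norm_det_checkerboard_submatrix_disjSum {M : ℕ} (G : Matrix (Fin M) (Fin M) ℂ)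
    (I J : Finset (Fin M)) :
    ‖((fromBlocks 0 G (-Gᵀ) 0).submatrix ((↑) : I.disjSum J → Fin M ⊕ Fin M) (↑)).det‖
      = ‖subdetC G I J‖ ^ 2 := by
  have hI := range_orderEmbOfFin I rfl
  by_cases h : J.card = I.card
  · have hJ := range_orderEmbOfFin J h
    have hblock : (-Gᵀ).submatrix (orderEmbOfFin J h) (orderEmbOfFin I rfl)
        = -(G.submatrix (orderEmbOfFin I rfl) (orderEmbOfFin J h))ᵀ := rfl
    rw [norm_det_fromBlocks_submatrix_disjSum _ _ (orderEmbOfFin I rfl).injective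
      (orderEmbOfFin J h).injective hI hJ, hblock, norm_det_fromBlocks_zero_zero, det_neg,
      det_transpose, subdetC, dif_pos h, norm_mul, norm_pow, norm_neg, norm_one, one_pow, one_mul,
      sq]
    rfl
  · have hJ := range_orderEmbOfFin J rfl
    rw [norm_det_fromBlocks_submatrix_disjSum _ _ (orderEmbOfFin I rfl).injective
      (orderEmbOfFin J rfl).injective hI hJ,
      det_fromBlocks_zero_zero_of_card_ne _ _ (by simpa using Ne.symm h), subdetC, dif_neg h]
    simp

theorem IsPermMatrix.exists_transpose_mul_mul_eq_submatrix {n : ℕ}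
    {P : Matrix (Fin n) (Fin n) ℂ} (hP : IsPermMatrix P) :
    ∃ σ : Equiv.Perm (Fin n), ∀ A, Pᵀ * A * P = A.submatrix σ σ := by
  obtain ⟨σ, hσ⟩ := hP
  have hPσ : P = σ.symm.toPEquiv.toMatrix := by
    ext i j
    simp [hσ, PEquiv.toMatrix_apply, Equiv.eq_symm_apply, eq_comm]
  refine ⟨σ, fun A => ?_⟩
  rw [hPσ, ← PEquiv.toMatrix_symm, ← Equiv.toPEquiv_symm, σ.symm_symm,
    PEquiv.toMatrix_toPEquiv_mul, PEquiv.mul_toMatrix_toPEquiv, submatrix_submatrix, σ.symm_symm]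
  rfl

theorem exists_equiv_submatrix_eq_checkerboard {M : ℕ}
    {R : Matrix (Fin (2 * M)) (Fin (2 * M)) ℂ} {G : Matrix (Fin M) (Fin M) ℂ}
    (hcheck : ∃ P : Matrix (Fin (2 * M)) (Fin (2 * M)) ℂ,
      IsPermMatrix P ∧ Pᵀ * R * P = checkerBlock G) :
    ∃ e : Fin M ⊕ Fin M ≃ Fin (2 * M), R.submatrix e e = fromBlocks 0 G (-Gᵀ) 0 := by
  obtain ⟨P, hP, hPRP⟩ := hcheck
  obtain ⟨σ, hσ⟩ := hP.exists_transpose_mul_mul_eq_submatrix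
  let e₀ : Fin M ⊕ Fin M ≃ Fin (2 * M) := finSumFinEquiv.trans (finCongr (two_mul M).symm)
  refine ⟨e₀.trans σ, ?_⟩
  have h := hσ R ▸ hPRP
  rw [checkerBlock, reindex_apply] at h
  ext i j
  simpa [e₀] using congrFun (congrFun h (e₀ i)) (e₀ j)

theorem pfaffian_minor_correspondence (M : ℕ)
    (R : Matrix (Fin (2 * M)) (Fin (2 * M)) ℂ) (hskew : Rᵀ = -R)
    (G : Matrix (Fin M) (Fin M) ℂ)
    (hcheck : ∃ P : Matrix (Fin (2 * M)) (Fin (2 * M)) ℂ,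
      IsPermMatrix P ∧ Pᵀ * R * P = checkerBlock G) :
    ∀ α : ℝ, 0 < α → PfPowC R α = DetPowC G α := by
  intro α hα
  obtain ⟨e, hRe⟩ := exists_equiv_submatrix_eq_checkerboard hcheck
  calc PfPowC R α
      = ∑ U : Finset (Fin M ⊕ Fin M),
          ‖((fromBlocks 0 G (-Gᵀ) 0).submatrix ((↑) : U → _) (↑)).det‖ ^ (α / 2) := by
        rw [PfPowC_eq_sum_of_transpose_eq_neg hskew hα.ne', ← hRe]
        exact (Fintype.sum_equiv e.finsetCongr _ _ fun U => by
          rw [Equiv.finsetCongr_apply, norm_subdetC_map_equiv]).symm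
    _ = ∑ p : Finset (Fin M) × Finset (Fin M),
          ‖((fromBlocks 0 G (-Gᵀ) 0).submatrix ((↑) : p.1.disjSum p.2 → _) (↑)).det‖
            ^ (α / 2) :=
        (Equiv.sum_comp sumEquiv.symm.toEquiv _).symm
    _ = ∑ p : Finset (Fin M) × Finset (Fin M), ‖subdetC G p.1 p.2‖ ^ α := by
        refine sum_congr rfl fun p _ => ?_
        rw [norm_det_checkerboard_submatrix_disjSum, ← Real.rpow_natCast,
          ← Real.rpow_mul (norm_nonneg _)]
        congr 1
        ring
    _ = DetPowC G α := by rw [DetPowC_eq_sum G hα.ne', Fintype.sum_prod_type]
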